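/- arXiv:2005.03879 — 4 statements merged into one kernel-verified Lean document; each statement's English description precedes it below -/
import Mathlib

section
/- Let G_m(ϑ) = 2π/ϑ and F(ϑ) = (1 - exp(-ϑ/(2ē))) / (1 - exp(-π/ē)) for ϑ ∈ (0, π/2) and fixed ē > 0. Then the product G_m(ϑ)·F(ϑ) is a strictly decreasing function of ϑ. -/
/-!
With `x = θ / (2ē)`, the product `G_m(θ) F(θ)` is a positive constant times `(1 - e^{-x}) / x`,
the slope of the secant of the strictly convex `exp` between `-x` and `0`; such slopes increase
with `-x`, so they decrease with `θ`.
-/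

open Real Set

lemma strictAntiOn_one_sub_exp_neg_div : StrictAntiOn (fun x : ℝ => (1 - exp (-x)) / x) (Ioi 0) := by
  intro x (hx : 0 < x) y (hy : 0 < y) hxy
  have slope := strictConvexOn_exp.secant_strict_mono (mem_univ 0) (mem_univ (-y)) (mem_univ (-x))
    (by linarith) (by linarith) (neg_lt_neg hxy)
  simp only [exp_zero, sub_zero, div_neg, ← neg_div, neg_sub] at slope
  exact slope

lemma one_sub_exp_neg_pos {x : ℝ} (hx : 0 < x) : 0 < 1 - exp (-x) := by
  simpa using exp_lt_one_iff.mpr (neg_lt_zero.mpr hx)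

/-- The product of the mmWave mainlobe gain `G_m(θ) = 2π/θ` and the orientation effective
function `F(θ)` is strictly decreasing in the beamwidth `θ` on `(0, π/2)`. -/
theorem stmt2 (e : ℝ) (he : 0 < e) :
    StrictAntiOn (fun θ : ℝ =>
      (2 * Real.pi / θ) *
        ((1 - Real.exp (-θ / (2 * e))) / (1 - Real.exp (-Real.pi / e))))
      (Set.Ioo 0 (Real.pi / 2)) := by
  set c := π / e / (1 - exp (-(π / e)))
  have hc : 0 < c := div_pos (by positivity) (one_sub_exp_neg_pos (by positivity))
  have rescale : ∀ θ ≠ 0, (2 * π / θ) * ((1 - exp (-θ / (2 * e))) / (1 - exp (-π / e)))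
      = c * ((1 - exp (-(θ / (2 * e)))) / (θ / (2 * e))) := by
    intro θ hθ
    simp only [c, neg_div]
    field_simp
  intro a ha b hb hab
  simp only [rescale a ha.1.ne', rescale b hb.1.ne']
  refine mul_lt_mul_of_pos_left ?_ hc
  exact strictAntiOn_one_sub_exp_neg_div (div_pos ha.1 (by positivity))
    (div_pos hb.1 (by positivity)) (by gcongr)
end

section
/- For z > 2 and b > 0, the improper integral ∫_ℓ^∞ x·(1 - 1/(1 + b·x^{-z})) dx converges for every ℓ > 0 and equals (b·ℓ^{2-z}/(z-2)) · ₂F₁(1, 1 - 2/z; 2 - 2/z; -b·ℓ^{-z}). -/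
/-- `₂F₁(1, β; β + 1; -y)` via its Euler integral representation. -/
noncomputable def hyp2F1one (β y : ℝ) : ℝ :=
  β * ∫ t in (0:ℝ)..1, t ^ (β - 1) / (1 + y * t)

/-!
Substituting `x = ℓ * t ^ (-1 / z)` maps `t ∈ (0, 1)` onto `x ∈ (ℓ, ∞)` and turns `b * x ^ (-z)`
into `y * t` with `y = b * ℓ ^ (-z)`. The transformed integrand is
`b * ℓ ^ (2 - z) / z * t ^ (-2 / z) / (1 + y * t)`, integrable near `0` because `2 / z < 1`, and its
integral over `(0, 1)` is, up to the factor `1 - 2 / z`, the Euler integral defining `hyp2F1one`.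
-/

open MeasureTheory Set Real

section RpowSubstitution

variable {E : Type*} [NormedAddCommGroup E] [NormedSpace ℝ E] {ℓ p : ℝ}

lemma image_mul_rpow_Ioo_zero_one (hl : 0 < ℓ) (hp : p < 0) :
    (fun t : ℝ => ℓ * t ^ p) '' Ioo 0 1 = Ioi ℓ := by
  ext x
  constructor
  · rintro ⟨t, ⟨ht₀, ht₁⟩, rfl⟩
    have : 1 < t ^ p := one_lt_rpow_of_pos_of_lt_one_of_neg ht₀ ht₁ hp
    show ℓ < ℓ * t ^ p
    nlinarith
  · intro hx
    have hx' : 1 < x / ℓ := (one_lt_div hl).2 hx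
    refine ⟨(x / ℓ) ^ p⁻¹, ⟨by positivity, rpow_lt_one_of_one_lt_of_neg hx' (inv_lt_zero.2 hp)⟩, ?_⟩
    show ℓ * ((x / ℓ) ^ p⁻¹) ^ p = x
    rw [← rpow_mul (by positivity), inv_mul_cancel₀ hp.ne, rpow_one]
    field_simp

lemma injOn_mul_rpow (hl : ℓ ≠ 0) (hp : p ≠ 0) : InjOn (fun t : ℝ => ℓ * t ^ p) (Ioi 0) :=
  fun _ hs _ ht hst =>
    rpow_left_injOn hp (mem_Ioi.1 hs).le (mem_Ioi.1 ht).le (mul_left_cancel₀ hl hst)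

lemma hasDerivAt_mul_rpow {t : ℝ} (ht : 0 < t) :
    HasDerivAt (fun t : ℝ => ℓ * t ^ p) (ℓ * (p * t ^ (p - 1))) t :=
  (hasDerivAt_rpow_const (Or.inl ht.ne')).const_mul ℓ

lemma abs_mul_mul_rpow (hl : 0 < ℓ) {t : ℝ} (ht : 0 < t) :
    |ℓ * (p * t ^ (p - 1))| = ℓ * |p| * t ^ (p - 1) := by
  rw [abs_mul, abs_mul, abs_of_pos hl, abs_of_pos (rpow_pos_of_pos ht _), mul_assoc]

theorem integrableOn_Ioi_iff_integrableOn_comp_mul_rpow (hl : 0 < ℓ) (hp : p < 0) (g : ℝ → E) :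
    IntegrableOn g (Ioi ℓ) ↔
      IntegrableOn (fun t => (ℓ * |p| * t ^ (p - 1)) • g (ℓ * t ^ p)) (Ioo 0 1) := by
  rw [← image_mul_rpow_Ioo_zero_one hl hp,
    integrableOn_image_iff_integrableOn_abs_deriv_smul measurableSet_Ioo
      (fun t ht => (hasDerivAt_mul_rpow ht.1).hasDerivWithinAt)
      ((injOn_mul_rpow hl.ne' hp.ne).mono Ioo_subset_Ioi_self)]
  exact integrableOn_congr_fun
    (fun t ht => by simp only [abs_mul_mul_rpow hl ht.1]) measurableSet_Ioo

theorem integral_Ioi_eq_integral_comp_mul_rpow (hl : 0 < ℓ) (hp : p < 0) (g : ℝ → E) :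
    ∫ x in Ioi ℓ, g x = ∫ t in Ioo 0 1, (ℓ * |p| * t ^ (p - 1)) • g (ℓ * t ^ p) := by
  rw [← image_mul_rpow_Ioo_zero_one hl hp,
    integral_image_eq_integral_abs_deriv_smul measurableSet_Ioo
      (fun t ht => (hasDerivAt_mul_rpow ht.1).hasDerivWithinAt)
      ((injOn_mul_rpow hl.ne' hp.ne).mono Ioo_subset_Ioi_self)]
  exact setIntegral_congr_fun measurableSet_Ioo
    (fun t ht => by simp only [abs_mul_mul_rpow hl ht.1])

end RpowSubstitution

lemma integrableOn_rpow_div_one_add_mul {a y : ℝ} (ha : -1 < a) (hy : 0 ≤ y) :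
    IntegrableOn (fun t : ℝ => t ^ a / (1 + y * t)) (Ioo 0 1) := by
  have hcont : ContinuousOn (fun t : ℝ => (1 + y * t)⁻¹) (uIcc 0 1) := by
    refine ContinuousOn.inv₀ (by fun_prop) fun t ht => ?_
    rw [uIcc_of_le zero_le_one] at ht
    nlinarith [ht.1]
  have := (intervalIntegral.intervalIntegrable_rpow' ha).mul_continuousOn hcont
  rw [intervalIntegrable_iff_integrableOn_Ioc_of_le zero_le_one] at this
  exact this.mono_set Ioo_subset_Ioc_self

lemma hyp2F1one_eq_setIntegral (β y : ℝ) :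
    hyp2F1one β y = β * ∫ t in Ioo 0 1, t ^ (β - 1) / (1 + y * t) := by
  rw [hyp2F1one, intervalIntegral.integral_of_le zero_le_one, integral_Ioc_eq_integral_Ioo]

lemma interference_integrand_comp_mul_rpow {b z ℓ t : ℝ} (hb : 0 ≤ b) (hz : 0 < z) (hl : 0 < ℓ)
    (ht : 0 < t) :
    (ℓ * |-1 / z| * t ^ (-1 / z - 1)) *
        ((ℓ * t ^ (-1 / z)) * (1 - 1 / (1 + b * (ℓ * t ^ (-1 / z)) ^ (-z)))) =
      b * ℓ ^ (2 - z) / z * (t ^ (-2 / z) / (1 + b * ℓ ^ (-z) * t)) := by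
  have hinv : (ℓ * t ^ (-1 / z)) ^ (-z) = ℓ ^ (-z) * t := by
    rw [mul_rpow hl.le (by positivity), ← rpow_mul ht.le,
      show -1 / z * -z = 1 by field_simp, rpow_one]
  have ht_pow : t ^ (-1 / z - 1) * t ^ (-1 / z) * t = t ^ (-2 / z) := by
    rw [← rpow_add ht, ← rpow_add_one ht.ne']
    ring_nf
  have hl_pow : ℓ * ℓ * ℓ ^ (-z) = ℓ ^ (2 - z) := by
    rw [show (2:ℝ) - z = 1 + 1 + -z by ring, rpow_add hl, rpow_add hl, rpow_one]
  have hD : 0 < 1 + b * ℓ ^ (-z) * t := by positivity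
  rw [hinv, abs_of_neg (div_neg_of_neg_of_pos neg_one_lt_zero hz), ← ht_pow, ← hl_pow]
  field_simp
  ring

/-- The improper interference integral converges and equals the closed hypergeometric form. -/
theorem stmt4 (b z ℓ : ℝ) (hb : 0 < b) (hz : 2 < z) (hl : 0 < ℓ) :
    MeasureTheory.IntegrableOn (fun x : ℝ => x * (1 - 1 / (1 + b * x ^ (-z)))) (Set.Ioi ℓ) ∧
    ∫ x in Set.Ioi ℓ, x * (1 - 1 / (1 + b * x ^ (-z)))
      = (b * ℓ ^ (2 - z) / (z - 2)) * hyp2F1one (1 - 2 / z) (b * ℓ ^ (-z)) := by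
  have hz₀ : 0 < z := by linarith
  have hp : -1 / z < 0 := div_neg_of_neg_of_pos neg_one_lt_zero hz₀
  have hsubst := fun t (ht : t ∈ Ioo (0:ℝ) 1) =>
    interference_integrand_comp_mul_rpow hb.le hz₀ hl ht.1
  have hint : IntegrableOn (fun t : ℝ => t ^ (-2 / z) / (1 + b * ℓ ^ (-z) * t)) (Ioo 0 1) :=
    integrableOn_rpow_div_one_add_mul (by rw [neg_div, neg_lt_neg_iff, div_lt_one hz₀]; linarith)
      (by positivity)
  refine ⟨?_, ?_⟩
  · rw [integrableOn_Ioi_iff_integrableOn_comp_mul_rpow hl hp]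
    simp_rw [smul_eq_mul]
    exact IntegrableOn.congr_fun (hint.const_mul _) (fun t ht => (hsubst t ht).symm)
      measurableSet_Ioo
  · simp_rw [integral_Ioi_eq_integral_comp_mul_rpow hl hp, smul_eq_mul]
    rw [setIntegral_congr_fun measurableSet_Ioo hsubst, integral_const_mul,
      hyp2F1one_eq_setIntegral, show 1 - 2 / z - 1 = -2 / z by ring]
    have : z - 2 ≠ 0 := by linarith
    field_simp
end

section
/- Fix δ > 0 and 0 < h_L < h_U. The function CP(λ) = (Erf(√(πλδ) h_U) - Erf(√(πλδ) h_L)) / (2√(λδ)(1+δ)(h_U - h_L)) is strictly decreasing in λ on (0, ∞) and tends to 0 as λ → ∞. -/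
/-- The standard error function. -/
noncomputable def Erf (x : ℝ) : ℝ :=
  2 / Real.sqrt Real.pi * ∫ t in (0:ℝ)..x, Real.exp (-t ^ 2)

/-!
Substituting `t = √(πλδ) s` turns the difference of error functions into
`2 √(λδ) ∫_{h_L}^{h_U} exp(-πλδ s²) ds`, so the factor `2 √(λδ)` cancels and `CP(λ)` is a positive
multiple of `∫_{h_L}^{h_U} exp(-k s²) ds` at `k = πλδ`. This Gaussian integral is strictly
decreasing in `k` and, as `h_L > 0`, is at most `(h_U - h_L) exp(-k h_L²) → 0`.
-/

open Real Filter Set intervalIntegral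

lemma Erf_mul_sub_Erf_mul (a b c : ℝ) :
    Erf (a * c) - Erf (a * b) = 2 / √π * a * ∫ s in b..c, exp (-(a ^ 2 * s ^ 2)) := by
  have hint : ∀ x y : ℝ, IntervalIntegrable (fun t => exp (-t ^ 2)) MeasureTheory.volume x y :=
    fun x y => (by fun_prop : Continuous fun t : ℝ => exp (-t ^ 2)).intervalIntegrable x y
  rw [Erf, Erf, ← mul_sub, integral_interval_sub_left (hint 0 _) (hint 0 _),
    ← smul_integral_comp_mul_left (fun t => exp (-t ^ 2)) a, smul_eq_mul, mul_assoc]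
  simp only [mul_pow]

lemma strictAnti_integral_exp_neg_mul_sq {b c : ℝ} (hbc : b < c) :
    StrictAnti fun k : ℝ => ∫ s in b..c, exp (-(k * s ^ 2)) := by
  intro k k' hkk'
  have hcont : ∀ k : ℝ, ContinuousOn (fun s : ℝ => exp (-(k * s ^ 2))) (Icc b c) :=
    fun k => by fun_prop
  refine integral_lt_integral_of_continuousOn_of_le_of_exists_lt hbc (hcont k') (hcont k)
    (fun s _ => by gcongr) ?_
  -- some endpoint of `[b, c]` is nonzero, and there the two Gaussians differ
  obtain ⟨s, hs, hs0⟩ : ∃ s ∈ Icc b c, s ≠ 0 := by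
    by_cases hc : c = 0
    · exact ⟨b, left_mem_Icc.2 hbc.le, by linarith⟩
    · exact ⟨c, right_mem_Icc.2 hbc.le, hc⟩
  exact ⟨s, hs, by have := pow_pos (abs_pos.2 hs0) 2; rw [sq_abs] at this; gcongr⟩

lemma tendsto_integral_exp_neg_mul_sq_atTop {b c : ℝ} (hb : 0 < b) (hbc : b ≤ c) :
    Tendsto (fun k : ℝ => ∫ s in b..c, exp (-(k * s ^ 2))) atTop (nhds 0) := by
  have hbound : ∀ k : ℝ, 0 ≤ k →
      ∫ s in b..c, exp (-(k * s ^ 2)) ≤ (c - b) * exp (-(k * b ^ 2)) := by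
    intro k hk
    calc ∫ s in b..c, exp (-(k * s ^ 2))
        ≤ ∫ _ in b..c, exp (-(k * b ^ 2)) := by
          refine integral_mono_on hbc (Continuous.intervalIntegrable (by fun_prop) b c)
            intervalIntegrable_const fun s hs => ?_
          have : b ^ 2 ≤ s ^ 2 := pow_le_pow_left₀ hb.le hs.1 2
          gcongr
      _ = (c - b) * exp (-(k * b ^ 2)) := by rw [integral_const, smul_eq_mul]
  have hexp : Tendsto (fun k : ℝ => (c - b) * exp (-(k * b ^ 2))) atTop (nhds 0) := by
    simpa using (tendsto_exp_atBot.comp <| tendsto_neg_atTop_atBot.comp <|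
      tendsto_id.atTop_mul_const (pow_pos hb 2)).const_mul (c - b)
  refine squeeze_zero' (Eventually.of_forall fun k => ?_)
    ((eventually_ge_atTop 0).mono hbound) hexp
  exact integral_nonneg hbc fun s _ => (exp_pos _).le

/-- The RTNA coverage probability is strictly decreasing in the UAV density `λ` and
tends to `0` as `λ → ∞`. -/
theorem stmt10 (δ hL hU : ℝ) (hδ : 0 < δ) (hhL : 0 < hL) (hLU : hL < hU) :
    let CP : ℝ → ℝ := fun lam =>
      (Erf (Real.sqrt (Real.pi * lam * δ) * hU) - Erf (Real.sqrt (Real.pi * lam * δ) * hL))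
        / (2 * Real.sqrt (lam * δ) * (1 + δ) * (hU - hL))
    StrictAntiOn CP (Set.Ioi 0) ∧
    Filter.Tendsto CP Filter.atTop (nhds 0) := by
  intro CP
  set G : ℝ → ℝ := fun k => ∫ s in hL..hU, exp (-(k * s ^ 2))
  have hC : 0 < (1 + δ) * (hU - hL) := by nlinarith
  have hCP : ∀ lam : ℝ, 0 < lam → CP lam = G (π * lam * δ) / ((1 + δ) * (hU - hL)) := by
    intro lam hlam
    have hsq : √(π * lam * δ) = √π * √(lam * δ) := by rw [mul_assoc, sqrt_mul pi_pos.le]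
    have hpos : 0 < √(lam * δ) := sqrt_pos.2 (by positivity)
    simp only [CP, G, Erf_mul_sub_Erf_mul, sq_sqrt (by positivity : 0 ≤ π * lam * δ)]
    rw [hsq]
    field_simp [(sqrt_pos.2 pi_pos).ne']
  have hk : StrictMono fun lam : ℝ => π * lam * δ := fun x y hxy =>
    mul_lt_mul_of_pos_right (mul_lt_mul_of_pos_left hxy pi_pos) hδ
  refine ⟨fun x hx y hy hxy => ?_, ?_⟩
  · rw [hCP x hx, hCP y hy]
    exact div_lt_div_of_pos_right ((strictAnti_integral_exp_neg_mul_sq hLU) (hk hxy)) hC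
  · have hlin : Tendsto (fun lam : ℝ => π * lam * δ) atTop atTop := by
      exact (tendsto_id.atTop_mul_const (mul_pos pi_pos hδ)).congr fun lam => by dsimp; ring
    have := ((tendsto_integral_exp_neg_mul_sq_atTop hhL hLU.le).comp hlin).div_const
      ((1 + δ) * (hU - hL))
    rw [zero_div] at this
    exact this.congr' ((eventually_gt_atTop 0).mono fun lam hlam => (hCP lam hlam).symm)
end

section
/- For α > 2 and τ > 0, write ω₁(α, τ) = ₂F₁(1, 1 - 2/α; 2 - 2/α; -τ). Then 0 < ω₁(α, τ) < 1, and ω₁(α, τ) is strictly decreasing in α for fixed τ > 0. -/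
open Set MeasureTheory intervalIntegral Real

lemma contG {c τ : ℝ} (hc : 0 < c) (hτ : 0 < τ) :
    ContinuousOn (fun t : ℝ => 1 / (1 + τ * t ^ c)) (Set.Icc 0 1) := by
  apply ContinuousOn.div continuousOn_const
  · exact continuousOn_const.add (continuousOn_const.mul
      ((Real.continuous_rpow_const hc.le).continuousOn))
  · intro x hx
    have h0 := Real.rpow_nonneg hx.1 c
    nlinarith

lemma Jint {c τ : ℝ} (hc : 0 < c) (hτ : 0 < τ) :
    IntervalIntegrable (fun t : ℝ => 1 / (1 + τ * t ^ c)) volume 0 1 :=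
  (contG hc hτ).intervalIntegrable_of_Icc zero_le_one

lemma Jpos {c τ : ℝ} (hc : 0 < c) (hτ : 0 < τ) :
    0 < ∫ t in (0:ℝ)..1, 1 / (1 + τ * t ^ c) := by
  apply intervalIntegral.intervalIntegral_pos_of_pos_on (Jint hc hτ) _ zero_lt_one
  intro x hx
  have h0 := Real.rpow_nonneg hx.1.le c
  positivity

lemma Jlt1 {c τ : ℝ} (hc : 0 < c) (hτ : 0 < τ) :
    (∫ t in (0:ℝ)..1, 1 / (1 + τ * t ^ c)) < 1 := by
  have h := intervalIntegral.integral_lt_integral_of_continuousOn_of_le_of_exists_lt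
    (f := fun t : ℝ => 1 / (1 + τ * t ^ c)) (g := fun _ : ℝ => (1:ℝ))
    zero_lt_one (contG hc hτ) continuousOn_const ?_ ?_
  · simpa using h
  · intro x hx
    have h0 := Real.rpow_nonneg hx.1.le c
    rw [div_le_one (by nlinarith)]
    nlinarith
  · refine ⟨1, by norm_num, ?_⟩
    show 1 / (1 + τ * (1:ℝ) ^ c) < 1
    rw [Real.one_rpow, mul_one, div_lt_one (by linarith)]
    linarith

lemma Jmono {c₁ c₂ τ : ℝ} (hc₂ : 0 < c₂) (hlt : c₂ < c₁) (hτ : 0 < τ) :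
    (∫ t in (0:ℝ)..1, 1 / (1 + τ * t ^ c₂)) < ∫ t in (0:ℝ)..1, 1 / (1 + τ * t ^ c₁) := by
  have hc₁ : 0 < c₁ := hc₂.trans hlt
  apply intervalIntegral.integral_lt_integral_of_continuousOn_of_le_of_exists_lt
    zero_lt_one (contG hc₂ hτ) (contG hc₁ hτ)
  · intro x hx
    have h1 : x ^ c₁ ≤ x ^ c₂ :=
      Real.rpow_le_rpow_of_exponent_ge hx.1 hx.2 hlt.le
    have h2 := Real.rpow_nonneg hx.1.le c₁
    apply one_div_le_one_div_of_le (by nlinarith)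
    nlinarith
  · refine ⟨1/2, by norm_num, ?_⟩
    have h1 : (1/2:ℝ) ^ c₁ < (1/2:ℝ) ^ c₂ :=
      Real.rpow_lt_rpow_of_exponent_gt (by norm_num) (by norm_num) hlt
    have h2 := Real.rpow_nonneg (by norm_num : (0:ℝ) ≤ 1/2) c₁
    apply one_div_lt_one_div_of_lt (by nlinarith)
    nlinarith

lemma key {β τ : ℝ} (hβ0 : 0 < β) (hβ1 : β < 1) (hτ : 0 < τ) :
    hyp2F1one β τ = ∫ t in (0:ℝ)..1, 1 / (1 + τ * t ^ (1/β)) := by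
  have hc : (1:ℝ) < 1/β := by
    rw [lt_div_iff₀ hβ0]; linarith
  set c : ℝ := 1/β with hcdef
  have hc0 : 0 < c := by linarith
  have hcb : c * β = 1 := by
    rw [hcdef]; field_simp
  set f : ℝ → ℝ := fun t => t ^ c with hf
  set f' : ℝ → ℝ := fun t => c * t ^ (c - 1) with hf'
  set g : ℝ → ℝ := fun x => β * (x ^ (β - 1) / (1 + τ * x)) with hg
  have hfc : ContinuousOn f (uIcc (0:ℝ) 1) := (Real.continuous_rpow_const hc0.le).continuousOn
  have hff' : ∀ x ∈ Ioo (min (0:ℝ) 1) (max (0:ℝ) 1), HasDerivWithinAt f (f' x) (Ioi x) x := by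
    intro x hx
    exact (Real.hasDerivAt_rpow_const (Or.inr hc.le)).hasDerivWithinAt
  have hgcont : ContinuousOn g (f '' Ioo (min (0:ℝ) 1) (max (0:ℝ) 1)) := by
    have himg : f '' Ioo (min (0:ℝ) 1) (max (0:ℝ) 1) ⊆ Ioi 0 := by
      rintro y ⟨x, hx, rfl⟩
      norm_num at hx
      exact Real.rpow_pos_of_pos hx.1 c
    refine ContinuousOn.mono ?_ himg
    apply continuousOn_const.mul
    apply ContinuousOn.div
    · exact fun x hx => ((Real.continuousAt_rpow_const x _ (Or.inl (ne_of_gt hx))).continuousWithinAt)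
    · exact continuousOn_const.add (continuousOn_const.mul continuousOn_id)
    · intro x hx
      have h0 : (0:ℝ) < x := hx
      intro h
      try simp only [id_eq] at h
      nlinarith
  have hgint : IntervalIntegrable g volume 0 1 := by
    have h1 : IntervalIntegrable (fun x : ℝ => x ^ (β - 1)) volume 0 1 :=
      intervalIntegral.intervalIntegrable_rpow' (by linarith)
    have h2 := h1.mul_continuousOn (g := fun x => β / (1 + τ * x)) ?_
    · have he : g = fun x => x ^ (β - 1) * (β / (1 + τ * x)) := by
        funext x; simp only [hg]; ring
      rwa [he]
    · apply ContinuousOn.div continuousOn_const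
        (continuousOn_const.add (continuousOn_const.mul continuousOn_id))
      intro x hx
      rw [uIcc_of_le (by norm_num : (0:ℝ) ≤ 1)] at hx
      intro h
      simp only [Pi.add_apply, Pi.mul_apply, id_eq] at h
      nlinarith [hx.1]
  have hgint' : IntegrableOn g (f '' uIcc (0:ℝ) 1) := by
    have hsub : f '' uIcc (0:ℝ) 1 ⊆ Icc 0 1 := by
      rintro y ⟨x, hx, rfl⟩
      rw [uIcc_of_le (by norm_num : (0:ℝ) ≤ 1)] at hx
      exact ⟨Real.rpow_nonneg hx.1 c, Real.rpow_le_one hx.1 hx.2 hc0.le⟩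
    exact ((intervalIntegrable_iff_integrableOn_Icc_of_le zero_le_one).mp hgint).mono_set hsub
  have hpt : ∀ x ∈ Ioc (0:ℝ) 1, f' x • (g ∘ f) x = 1 / (1 + τ * x ^ c) := by
    intro x hx
    have hx0 : 0 < x := hx.1
    have hden : (0:ℝ) < 1 + τ * x ^ c := by
      have := Real.rpow_nonneg hx0.le c
      nlinarith
    simp only [smul_eq_mul, Function.comp, hf, hf', hg]
    rw [← Real.rpow_mul hx0.le]
    have e1 : x ^ (c - 1) * x ^ (c * (β - 1)) = 1 := by
      rw [← Real.rpow_add hx0, show c - 1 + c * (β - 1) = c * β - 1 by ring, hcb]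
      simp
    have e2 : c * x ^ (c - 1) * (β * (x ^ (c * (β - 1)) / (1 + τ * x ^ c)))
        = (c * β) * ((x ^ (c - 1) * x ^ (c * (β - 1))) / (1 + τ * x ^ c)) := by ring
    rw [e2, hcb, e1, one_mul]
  have hbd : ∀ x ∈ Icc (0:ℝ) 1, ‖f' x • (g ∘ f) x‖ ≤ 1 := by
    intro x hx
    rcases eq_or_lt_of_le hx.1 with h | h
    · simp only [← h, smul_eq_mul, Function.comp, hf, hf', hg,
        Real.zero_rpow (by linarith : c - 1 ≠ 0)]
      norm_num
    · rw [hpt x ⟨h, hx.2⟩]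
      have hd := Real.rpow_nonneg hx.1 c
      rw [Real.norm_eq_abs, abs_of_nonneg (by positivity), div_le_one (by nlinarith)]
      nlinarith
  have hg2 : IntegrableOn (fun x => f' x • (g ∘ f) x) (uIcc (0:ℝ) 1) := by
    rw [uIcc_of_le (by norm_num : (0:ℝ) ≤ 1)]
    apply Integrable.mono' (integrable_const (1:ℝ)) ?_
      (((ae_restrict_iff' measurableSet_Icc).2 (Filter.Eventually.of_forall hbd)))
    apply Measurable.aestronglyMeasurable
    simp only [hf, hf', hg, Function.comp, smul_eq_mul]
    fun_prop
  have heq := intervalIntegral.integral_comp_smul_deriv''' hfc hff' hgcont hgint' hg2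
  have hf0 : f 0 = 0 := Real.zero_rpow hc0.ne'
  have hf1 : f 1 = 1 := Real.one_rpow c
  rw [hf0, hf1] at heq
  have hlhs : (∫ x in (0:ℝ)..1, f' x • (g ∘ f) x)
      = ∫ t in (0:ℝ)..1, 1 / (1 + τ * t ^ c) := by
    apply intervalIntegral.integral_congr_ae
    apply Filter.Eventually.of_forall
    intro x hx
    rw [uIoc_of_le (by norm_num : (0:ℝ) ≤ 1)] at hx
    exact hpt x hx
  have hrhs : (∫ u in (0:ℝ)..1, g u) = hyp2F1one β τ := by
    simp only [hg, hyp2F1one]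
    rw [intervalIntegral.integral_const_mul]
  rw [hlhs, hrhs] at heq
  exact heq.symm

/-- `ω₁(α, τ) = ₂F₁(1, 1 - 2/α; 2 - 2/α; -τ)` lies in `(0,1)` and is strictly
decreasing in the pathloss exponent `α` for fixed `τ > 0`. -/
theorem stmt15 (τ : ℝ) (hτ : 0 < τ) :
    (∀ α : ℝ, 2 < α →
      0 < hyp2F1one (1 - 2 / α) τ ∧ hyp2F1one (1 - 2 / α) τ < 1) ∧
    StrictAntiOn (fun α : ℝ => hyp2F1one (1 - 2 / α) τ) (Set.Ioi 2) := by
  have hβ : ∀ α : ℝ, 2 < α → 0 < 1 - 2 / α ∧ 1 - 2 / α < 1 := by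
    intro α hα
    have hα0 : (0:ℝ) < α := by linarith
    constructor
    · have : 2 / α < 1 := by rw [div_lt_one hα0]; linarith
      linarith
    · have : 0 < 2 / α := by positivity
      linarith
  constructor
  · intro α hα
    obtain ⟨h0, h1⟩ := hβ α hα
    rw [key h0 h1 hτ]
    exact ⟨Jpos (by positivity) hτ, Jlt1 (by positivity) hτ⟩
  · intro α₁ h1 α₂ h2 h12
    simp only [Set.mem_Ioi] at h1 h2
    obtain ⟨hb1, hb1'⟩ := hβ α₁ h1
    obtain ⟨hb2, hb2'⟩ := hβ α₂ h2
    simp only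
    rw [key hb1 hb1' hτ, key hb2 hb2' hτ]
    apply Jmono (by positivity) ?_ hτ
    apply one_div_lt_one_div_of_lt hb1
    have : 2 / α₂ < 2 / α₁ := by
      apply div_lt_div_of_pos_left (by norm_num) (by linarith) h12
    linarith
end
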